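/- arXiv:2303.11940 — 5 statements merged into one kernel-verified Lean document; each statement's English description precedes it below -/
import Mathlib

section
/- A point z = (z₁, z₂, z₃, z₄) ∈ ℂ⁴ lies in the Lie ball L₄ if and only if the matrix A = [[z₁ + i z₂, z₃ + i z₄],[z₃ − i z₄, −z₁ + i z₂]] satisfies I₂ − A A* positive definite (equivalently, the operator norm of A is less than 1). -/
/-!
A Hermitian `2 × 2` matrix is positive definite iff both eigenvalues are positive, i.e. iff its
trace and determinant are positive. For `1 - A Aᴴ` these are `2 - ‖A‖²` and `1 - ‖A‖² + |det A|²`,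
with `‖A‖` the Frobenius norm. For the matrix of the theorem the parallelogram law gives
`‖A‖² = 2‖z‖²`, and `det A = -z∙z`, so the two conditions are exactly those defining `L₄`.
-/

open Complex Matrix
open scoped ComplexOrder

namespace Matrix

variable {𝕜 : Type*} [RCLike 𝕜]

theorem IsHermitian.posDef_fin_two_iff {M : Matrix (Fin 2) (Fin 2) 𝕜} (hM : M.IsHermitian) :
    M.PosDef ↔ 0 < RCLike.re M.trace ∧ 0 < RCLike.re M.det := by
  rw [hM.posDef_iff_eigenvalues_pos, hM.trace_eq_sum_eigenvalues, hM.det_eq_prod_eigenvalues,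
    Fin.forall_fin_two]
  simp only [Fin.sum_univ_two, Fin.prod_univ_two, ← RCLike.ofReal_add, ← RCLike.ofReal_mul,
    RCLike.ofReal_re]
  constructor
  · rintro ⟨h0, h1⟩
    exact ⟨add_pos h0 h1, mul_pos h0 h1⟩
  · rintro ⟨hsum, hprod⟩
    exact (pos_and_pos_or_neg_and_neg_of_mul_pos hprod).resolve_right fun h => by
      linarith [h.1, h.2]

theorem det_one_sub_fin_two (X : Matrix (Fin 2) (Fin 2) 𝕜) :
    (1 - X).det = 1 - X.trace + X.det := by
  simp only [det_fin_two, trace_fin_two, sub_apply, one_apply_eq, one_apply_ne zero_ne_one,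
    one_apply_ne one_ne_zero]
  ring

theorem trace_mul_conjTranspose_self_eq_sum {m n : Type*} [Fintype m] [Fintype n]
    (A : Matrix m n 𝕜) :
    (A * Aᴴ).trace = ∑ i, ∑ j, ((‖A i j‖ ^ 2 : ℝ) : 𝕜) := by
  simp [trace, mul_apply, RCLike.mul_conj]

theorem det_mul_conjTranspose_self {n : Type*} [Fintype n] [DecidableEq n] (A : Matrix n n 𝕜) :
    (A * Aᴴ).det = ((‖A.det‖ ^ 2 : ℝ) : 𝕜) := by
  simp [det_mul, det_conjTranspose, RCLike.mul_conj]

theorem posDef_one_sub_mul_conjTranspose_self_fin_two_iff (A : Matrix (Fin 2) (Fin 2) 𝕜) :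
    (1 - A * Aᴴ).PosDef ↔
      ∑ i, ∑ j, ‖A i j‖ ^ 2 < 2 ∧ ∑ i, ∑ j, ‖A i j‖ ^ 2 < 1 + ‖A.det‖ ^ 2 := by
  rw [(isHermitian_one.sub (isHermitian_mul_conjTranspose_self A)).posDef_fin_two_iff,
    det_one_sub_fin_two, trace_sub, trace_one, det_mul_conjTranspose_self,
    trace_mul_conjTranspose_self_eq_sum]
  simp only [← RCLike.ofReal_sum, map_add, map_sub, RCLike.ofReal_re, Fintype.card_fin,
    RCLike.natCast_re, RCLike.one_re, sub_add_eq_add_sub, sub_pos]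
  norm_num

end Matrix

theorem Complex.norm_add_I_mul_sq_add_norm_sub_I_mul_sq (a b : ℂ) :
    ‖a + I * b‖ ^ 2 + ‖a - I * b‖ ^ 2 = 2 * (‖a‖ ^ 2 + ‖b‖ ^ 2) := by
  rw [parallelogram_law_with_norm ℂ, norm_mul, norm_I, one_mul]

/-- `(z₁,z₂,z₃,z₄)` lies in the Lie ball `L₄` iff the matrix
`[[z₁+iz₂, z₃+iz₄],[z₃−iz₄, −z₁+iz₂]]` satisfies `I₂ − A Aᴴ` positive definite. -/
theorem stmt_3 (z₁ z₂ z₃ z₄ : ℂ) :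
    (Real.sqrt (‖z₁‖ ^ 2 + ‖z₂‖ ^ 2 +
        ‖z₃‖ ^ 2 + ‖z₄‖ ^ 2) < 1 ∧
      2 * (‖z₁‖ ^ 2 + ‖z₂‖ ^ 2 +
        ‖z₃‖ ^ 2 + ‖z₄‖ ^ 2) <
        1 + ‖z₁ ^ 2 + z₂ ^ 2 + z₃ ^ 2 + z₄ ^ 2‖ ^ 2) ↔
    (1 - !![z₁ + I * z₂, z₃ + I * z₄; z₃ - I * z₄, -z₁ + I * z₂] *
        !![z₁ + I * z₂, z₃ + I * z₄; z₃ - I * z₄, -z₁ + I * z₂]ᴴ).PosDef := by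
  set S := ‖z₁‖ ^ 2 + ‖z₂‖ ^ 2 + ‖z₃‖ ^ 2 + ‖z₄‖ ^ 2
  have hnorms : ∑ i, ∑ j, ‖!![z₁ + I * z₂, z₃ + I * z₄; z₃ - I * z₄, -z₁ + I * z₂] i j‖ ^ 2 =
      2 * S := by
    have h₁₂ := norm_add_I_mul_sq_add_norm_sub_I_mul_sq z₁ z₂
    have h₃₄ := norm_add_I_mul_sq_add_norm_sub_I_mul_sq z₃ z₄
    rw [← norm_neg (z₁ - _), neg_sub, sub_eq_neg_add] at h₁₂
    simp only [Fin.sum_univ_two, of_apply, cons_val', cons_val_zero, cons_val_one, empty_val',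
      cons_val_fin_one]
    linarith
  have hdet : (z₁ + I * z₂) * (-z₁ + I * z₂) - (z₃ + I * z₄) * (z₃ - I * z₄) =
      -(z₁ ^ 2 + z₂ ^ 2 + z₃ ^ 2 + z₄ ^ 2) := by
    linear_combination (z₂ ^ 2 + z₄ ^ 2) * I_sq
  rw [posDef_one_sub_mul_conjTranspose_self_fin_two_iff, det_fin_two_of, hnorms, hdet, norm_neg,
    Real.sqrt_lt' one_pos, one_pow]
  constructor <;> rintro ⟨h₁, h₂⟩ <;> constructor <;> linarith
end

section
/- A point z = (z₁, z₂, z₃) ∈ ℂ³ lies in the Lie ball L₃ if and only if the symmetric matrix A = [[z₁ + i z₂, z₃],[z₃, −z₁ + i z₂]] satisfies I₂ − A A* positive definite. -/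
/-!
A Hermitian `2 × 2` matrix is positive definite iff its trace and determinant are positive, since
these are the sum and product of its two real eigenvalues. For `H = 1 - A Aᴴ` one has
`tr H = 2 - ‖A‖²_F = 2 - 2‖z‖²` and `det H = 1 - tr (A Aᴴ) + |det A|² = 1 - 2‖z‖² + |z ∙ z|²`,
because `det A = -(z ∙ z)`. Positivity of these two numbers is exactly the pair of inequalities
defining `L₃`.
-/

open Complex Matrix
open scoped ComplexOrder

theorem pos_and_pos_iff_add_pos_and_mul_pos {α : Type*} [Ring α] [LinearOrder α]
    [IsStrictOrderedRing α] {a b : α} : 0 < a ∧ 0 < b ↔ 0 < a + b ∧ 0 < a * b := by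
  refine ⟨fun ⟨ha, hb⟩ => ⟨add_pos ha hb, mul_pos ha hb⟩, fun ⟨hsum, hprod⟩ => ?_⟩
  rcases mul_pos_iff.mp hprod with hpos | ⟨ha, hb⟩
  · exact hpos
  · exact (lt_asymm hsum (add_neg ha hb)).elim

namespace Matrix

variable {𝕜 : Type*} [RCLike 𝕜]

theorem IsHermitian.posDef_iff_trace_pos_and_det_pos {A : Matrix (Fin 2) (Fin 2) 𝕜}
    (hA : A.IsHermitian) : A.PosDef ↔ 0 < A.trace ∧ 0 < A.det := by
  rw [hA.posDef_iff_eigenvalues_pos, hA.trace_eq_sum_eigenvalues, hA.det_eq_prod_eigenvalues,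
    Fin.forall_fin_two, Fin.sum_univ_two, Fin.prod_univ_two, ← RCLike.ofReal_add,
    ← RCLike.ofReal_mul, RCLike.ofReal_pos, RCLike.ofReal_pos]
  exact pos_and_pos_iff_add_pos_and_mul_pos

theorem det_one_sub_fin_two_s4 {R : Type*} [CommRing R] (M : Matrix (Fin 2) (Fin 2) R) :
    (1 - M).det = 1 - M.trace + M.det := by
  simp only [det_fin_two, trace_fin_two, sub_apply, one_apply_eq, one_apply_ne, ne_eq,
    zero_ne_one, one_ne_zero, not_false_eq_true]
  ring

theorem trace_mul_conjTranspose_self {m n : Type*} [Fintype m] [Fintype n]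
    (A : Matrix m n 𝕜) : (A * Aᴴ).trace = ((∑ i, ∑ j, ‖A i j‖ ^ 2 : ℝ) : 𝕜) := by
  simp [trace, mul_apply, RCLike.mul_conj]

end Matrix

def lieBallMatrix (z₁ z₂ z₃ : ℂ) : Matrix (Fin 2) (Fin 2) ℂ :=
  !![z₁ + I * z₂, z₃; z₃, -z₁ + I * z₂]

theorem det_lieBallMatrix (z₁ z₂ z₃ : ℂ) :
    (lieBallMatrix z₁ z₂ z₃).det = -(z₁ ^ 2 + z₂ ^ 2 + z₃ ^ 2) := by
  rw [lieBallMatrix, det_fin_two_of]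
  linear_combination z₂ ^ 2 * I_sq

theorem trace_lieBallMatrix_mul_conjTranspose (z₁ z₂ z₃ : ℂ) :
    (lieBallMatrix z₁ z₂ z₃ * (lieBallMatrix z₁ z₂ z₃)ᴴ).trace =
      ((2 * (‖z₁‖ ^ 2 + ‖z₂‖ ^ 2 + ‖z₃‖ ^ 2) : ℝ) : ℂ) := by
  have parallelogram : ‖z₁ + I * z₂‖ ^ 2 + ‖-z₁ + I * z₂‖ ^ 2 = 2 * (‖z₁‖ ^ 2 + ‖z₂‖ ^ 2) := by
    simp only [Complex.sq_norm, normSq_apply, add_re, add_im, neg_re, neg_im, mul_re, mul_im,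
      I_re, I_im]
    ring
  rw [trace_mul_conjTranspose_self, RCLike.ofReal_eq_complex_ofReal, ofReal_inj]
  simp only [lieBallMatrix, Fin.sum_univ_two, of_apply, cons_val', cons_val_zero, cons_val_one,
    empty_val', cons_val_fin_one]
  linarith

/-- `(z₁,z₂,z₃)` lies in the Lie ball `L₃` iff the symmetric matrix
`[[z₁+iz₂, z₃],[z₃, −z₁+iz₂]]` satisfies `I₂ − A Aᴴ` positive definite. -/
theorem stmt_4 (z₁ z₂ z₃ : ℂ) :
    (Real.sqrt (‖z₁‖ ^ 2 + ‖z₂‖ ^ 2 + ‖z₃‖ ^ 2) < 1 ∧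
      2 * (‖z₁‖ ^ 2 + ‖z₂‖ ^ 2 + ‖z₃‖ ^ 2) <
        1 + ‖z₁ ^ 2 + z₂ ^ 2 + z₃ ^ 2‖ ^ 2) ↔
    (1 - !![z₁ + I * z₂, z₃; z₃, -z₁ + I * z₂] *
        !![z₁ + I * z₂, z₃; z₃, -z₁ + I * z₂]ᴴ).PosDef := by
  change _ ↔ (1 - lieBallMatrix z₁ z₂ z₃ * (lieBallMatrix z₁ z₂ z₃)ᴴ).PosDef
  have hH : (1 - lieBallMatrix z₁ z₂ z₃ * (lieBallMatrix z₁ z₂ z₃)ᴴ).IsHermitian :=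
    isHermitian_one.sub (isHermitian_mul_conjTranspose_self _)
  rw [hH.posDef_iff_trace_pos_and_det_pos, trace_sub, trace_one, Fintype.card_fin,
    det_one_sub_fin_two_s4, trace_lieBallMatrix_mul_conjTranspose, det_mul_conjTranspose_self,
    RCLike.ofReal_eq_complex_ofReal, det_lieBallMatrix, norm_neg, Real.sqrt_lt' one_pos, one_pow]
  simp only [Nat.cast_ofNat, ← ofReal_ofNat, ← ofReal_one, ← ofReal_sub, ← ofReal_add,
    zero_lt_real]
  constructor <;> rintro ⟨h₁, h₂⟩ <;> constructor <;> linarith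
end

section
/- The Lie ball Lₙ = {z ∈ ℂⁿ : ‖z‖ < 1 and 2‖z‖² < 1 + |z∙z|²} is a convex subset of ℂⁿ. -/
/-!
The function `p z = √((‖z‖² + |z∙z|) / 2) + √((‖z‖² - |z∙z|) / 2)` satisfies
`p z ^ 2 = ‖z‖² + √(‖z‖⁴ - |z∙z|²)`, so `Lₙ = {p < 1}`. It is the support function of
`D = {g : ‖g‖² + |g∙g| ≤ 2}`, i.e. `p z = max_{g ∈ D} Re (z∙g)`: after multiplying `z` by a unit
scalar we may assume `z∙z ≥ 0`, so that `z = x + i y` with `x ⊥ y`, `|x|² = (‖z‖² + |z∙z|) / 2` and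
`|y|² = (‖z‖² - |z∙z|) / 2`. Cauchy–Schwarz gives `Re (z∙g) ≤ |x| + |y|` on `D`, and
`g = x / |x| - i y / |y|` attains it. A maximum of real-linear functionals is convex, hence so are
its sublevel sets.
-/

open Finset

lemma add_lt_one_iff {a b : ℝ} (ha : 0 ≤ a) (hb : 0 ≤ b) :
    a + b < 1 ↔ a ^ 2 + b ^ 2 < 1 ∧ 2 * (a ^ 2 + b ^ 2) < 1 + (a ^ 2 - b ^ 2) ^ 2 := by
  have key : 1 + (a ^ 2 - b ^ 2) ^ 2 - 2 * (a ^ 2 + b ^ 2)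
      = (1 - (a + b) ^ 2) * (1 - (a - b) ^ 2) := by ring
  constructor
  · intro h
    have h₁ : 0 < 1 - (a + b) ^ 2 := by nlinarith
    have h₂ : 0 < 1 - (a - b) ^ 2 := by nlinarith
    exact ⟨by nlinarith, by nlinarith [mul_pos h₁ h₂]⟩
  · rintro ⟨h₁, h₂⟩
    have h₃ : 0 < 1 - (a - b) ^ 2 := by nlinarith
    have h₄ : 0 < 1 - (a + b) ^ 2 := by
      by_contra! h
      nlinarith [mul_nonpos_of_nonpos_of_nonneg h h₃.le]
    nlinarith

section NormalizedVector

variable {ι : Type*} [Fintype ι]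

lemma sum_mul_div_sqrt_sum_sq (a : ι → ℝ) :
    ∑ j, a j * (a j / √(∑ i, a i ^ 2)) = √(∑ i, a i ^ 2) := by
  simp only [mul_div_assoc', ← sq, ← sum_div, Real.div_sqrt]

lemma sum_div_sqrt_sum_sq_sq_le_one (a : ι → ℝ) : ∑ j, (a j / √(∑ i, a i ^ 2)) ^ 2 ≤ 1 := by
  simp only [div_pow, ← sum_div]
  rw [Real.sq_sqrt (sum_nonneg fun i _ => sq_nonneg (a i))]
  exact div_self_le_one _

end NormalizedVector

namespace LieBall

variable {ι : Type*} [Fintype ι]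

noncomputable def sqNorm (z : ι → ℂ) : ℝ := ∑ j, ‖z j‖ ^ 2

noncomputable def lieNorm (z : ι → ℂ) : ℝ :=
  √((sqNorm z + ‖z ⬝ᵥ z‖) / 2) + √((sqNorm z - ‖z ⬝ᵥ z‖) / 2)

def lieDualBall (ι : Type*) [Fintype ι] : Set (ι → ℂ) :=
  {g | sqNorm g + ‖g ⬝ᵥ g‖ ≤ 2}

lemma sum_sq_eq_dotProduct_self (z : ι → ℂ) : ∑ j, z j ^ 2 = z ⬝ᵥ z := by
  simp only [dotProduct, sq]

lemma sum_re_sq (z : ι → ℂ) : ∑ j, (z j).re ^ 2 = (sqNorm z + (z ⬝ᵥ z).re) / 2 := by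
  simp only [sqNorm, dotProduct, Complex.re_sum, Complex.sq_norm, Complex.normSq_apply,
    Complex.mul_re, ← sum_add_distrib, sum_div]
  exact sum_congr rfl fun j _ => by ring

lemma sum_im_sq (z : ι → ℂ) : ∑ j, (z j).im ^ 2 = (sqNorm z - (z ⬝ᵥ z).re) / 2 := by
  simp only [sqNorm, dotProduct, Complex.re_sum, Complex.sq_norm, Complex.normSq_apply,
    Complex.mul_re, ← sum_sub_distrib, sum_div]
  exact sum_congr rfl fun j _ => by ring

lemma sqNorm_eq_sum_re_sq_add_sum_im_sq (z : ι → ℂ) :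
    sqNorm z = ∑ j, (z j).re ^ 2 + ∑ j, (z j).im ^ 2 := by
  rw [sum_re_sq, sum_im_sq]; ring

lemma sum_re_mul_im (z : ι → ℂ) : ∑ j, (z j).re * (z j).im = (z ⬝ᵥ z).im / 2 := by
  simp only [dotProduct, Complex.im_sum, Complex.mul_im, sum_div]
  exact sum_congr rfl fun j _ => by ring

lemma re_dotProduct (z g : ι → ℂ) :
    (z ⬝ᵥ g).re = ∑ j, (z j).re * (g j).re + ∑ j, (z j).im * -(g j).im := by
  simp only [dotProduct, Complex.re_sum, Complex.mul_re, ← sum_add_distrib]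
  exact sum_congr rfl fun j _ => by ring

lemma norm_dotProduct_self_le (z : ι → ℂ) : ‖z ⬝ᵥ z‖ ≤ sqNorm z :=
  (norm_sum_le _ _).trans_eq (by simp [sqNorm, sq])

lemma sqNorm_smul {v : ℂ} (hv : ‖v‖ = 1) (z : ι → ℂ) : sqNorm (v • z) = sqNorm z := by
  simp [sqNorm, hv]

lemma norm_smul_dotProduct_smul {v : ℂ} (hv : ‖v‖ = 1) (z : ι → ℂ) :
    ‖(v • z) ⬝ᵥ (v • z)‖ = ‖z ⬝ᵥ z‖ := by
  simp [hv]

lemma lieNorm_smul {v : ℂ} (hv : ‖v‖ = 1) (z : ι → ℂ) : lieNorm (v • z) = lieNorm z := by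
  rw [lieNorm, lieNorm, sqNorm_smul hv, norm_smul_dotProduct_smul hv]

lemma smul_mem_lieDualBall {v : ℂ} (hv : ‖v‖ = 1) {g : ι → ℂ} (hg : g ∈ lieDualBall ι) :
    v • g ∈ lieDualBall ι := by
  rwa [lieDualBall, Set.mem_ofPred_eq, sqNorm_smul hv, norm_smul_dotProduct_smul hv]

lemma exists_norm_eq_one_sq_mul_eq_norm (c : ℂ) : ∃ v : ℂ, ‖v‖ = 1 ∧ v ^ 2 * c = ‖c‖ := by
  refine ⟨Complex.exp (-(c.arg / 2 : ℝ) * Complex.I), by simp [Complex.norm_exp], ?_⟩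
  calc _ = Complex.exp (-(c.arg / 2 : ℝ) * Complex.I) ^ 2 *
        (‖c‖ * Complex.exp (c.arg * Complex.I)) := by rw [Complex.norm_mul_exp_arg_mul_I]
    _ = ‖c‖ := by
        rw [mul_left_comm, ← Complex.exp_nat_mul, ← Complex.exp_add,
          show (2 : ℕ) * (-(c.arg / 2 : ℝ) * Complex.I) + c.arg * Complex.I = 0 by push_cast; ring,
          Complex.exp_zero, mul_one]


lemma re_dotProduct_le_lieNorm_of_dotProduct_self_eq_norm {z g : ι → ℂ}
    (hz : z ⬝ᵥ z = ‖z ⬝ᵥ z‖) (hg : g ∈ lieDualBall ι) : (z ⬝ᵥ g).re ≤ lieNorm z := by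
  have hre : (z ⬝ᵥ z).re = ‖z ⬝ᵥ z‖ := (congrArg Complex.re hz).trans (Complex.ofReal_re _)
  have hg' : sqNorm g + ‖g ⬝ᵥ g‖ ≤ 2 := hg
  have hgre : ∑ j, (g j).re ^ 2 ≤ 1 := by
    rw [sum_re_sq]; linarith [Complex.re_le_norm (g ⬝ᵥ g)]
  have hgim : ∑ j, (-(g j).im) ^ 2 ≤ 1 := by
    simp only [neg_sq]
    rw [sum_im_sq]
    linarith [neg_le_of_abs_le (Complex.abs_re_le_norm (g ⬝ᵥ g))]
  rw [lieNorm, ← hre, ← sum_re_sq, ← sum_im_sq, re_dotProduct]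
  gcongr
  · exact (Real.sum_mul_le_sqrt_mul_sqrt _ _ _).trans
      (mul_le_of_le_one_right (Real.sqrt_nonneg _) (Real.sqrt_le_one.2 hgre))
  · exact (Real.sum_mul_le_sqrt_mul_sqrt _ _ _).trans
      (mul_le_of_le_one_right (Real.sqrt_nonneg _) (Real.sqrt_le_one.2 hgim))

lemma exists_mem_lieDualBall_re_dotProduct_eq_of_dotProduct_self_eq_norm {z : ι → ℂ}
    (hz : z ⬝ᵥ z = ‖z ⬝ᵥ z‖) : ∃ g ∈ lieDualBall ι, (z ⬝ᵥ g).re = lieNorm z := by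
  have hre : (z ⬝ᵥ z).re = ‖z ⬝ᵥ z‖ := (congrArg Complex.re hz).trans (Complex.ofReal_re _)
  have horth : ∑ j, (z j).re * (z j).im = 0 := by
    rw [sum_re_mul_im, hz, Complex.ofReal_im, zero_div]
  set X := √(∑ j, (z j).re ^ 2)
  set Y := √(∑ j, (z j).im ^ 2)
  set g : ι → ℂ := fun j => ⟨(z j).re / X, -(z j).im / Y⟩
  have hP : ∑ j, (g j).re ^ 2 ≤ 1 := sum_div_sqrt_sum_sq_sq_le_one _
  have hR : ∑ j, (g j).im ^ 2 ≤ 1 := by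
    simpa only [g, neg_div, neg_sq] using sum_div_sqrt_sum_sq_sq_le_one fun j => (z j).im
  have hgg : ‖g ⬝ᵥ g‖ = |∑ j, (g j).re ^ 2 - ∑ j, (g j).im ^ 2| := by
    have him : (g ⬝ᵥ g).im = 0 := by
      have : (g ⬝ᵥ g).im / 2 = 0 := by
        simp only [← sum_re_mul_im, g, div_mul_div_comm, mul_neg, neg_div, sum_neg_distrib,
          ← sum_div, horth, zero_div, neg_zero]
      linarith
    rw [← Complex.abs_re_eq_norm.2 him, sum_re_sq, sum_im_sq]
    ring_nf
  refine ⟨g, ?_, ?_⟩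
  · show sqNorm g + ‖g ⬝ᵥ g‖ ≤ 2
    rw [hgg, sqNorm_eq_sum_re_sq_add_sum_im_sq]
    rcases abs_cases (∑ j, (g j).re ^ 2 - ∑ j, (g j).im ^ 2) with ⟨h, _⟩ | ⟨h, _⟩ <;>
      linarith
  · rw [re_dotProduct, lieNorm, ← hre, ← sum_re_sq, ← sum_im_sq]
    simp only [g, neg_div, neg_neg]
    exact congrArg₂ (· + ·) (sum_mul_div_sqrt_sum_sq _) (sum_mul_div_sqrt_sum_sq _)

theorem isGreatest_re_dotProduct_lieDualBall (z : ι → ℂ) :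
    IsGreatest ((fun g => (z ⬝ᵥ g).re) '' lieDualBall ι) (lieNorm z) := by
  obtain ⟨v, hv, hvz⟩ := exists_norm_eq_one_sq_mul_eq_norm (z ⬝ᵥ z)
  have hv₀ : v ≠ 0 := norm_ne_zero_iff.1 (hv ▸ one_ne_zero)
  have hvz' : (v • z) ⬝ᵥ (v • z) = ‖(v • z) ⬝ᵥ (v • z)‖ := by
    rw [norm_smul_dotProduct_smul hv, smul_dotProduct, dotProduct_smul, smul_smul, smul_eq_mul,
      ← sq, hvz]
  rw [← lieNorm_smul hv z]
  refine ⟨?_, ?_⟩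
  · obtain ⟨g, hg, hzg⟩ := exists_mem_lieDualBall_re_dotProduct_eq_of_dotProduct_self_eq_norm hvz'
    refine ⟨v • g, smul_mem_lieDualBall hv hg, ?_⟩
    rw [← hzg]
    simp only [dotProduct_smul, smul_dotProduct]
  · rintro _ ⟨g, hg, rfl⟩
    have hv' : ‖v⁻¹‖ = 1 := by rw [norm_inv, hv, inv_one]
    convert re_dotProduct_le_lieNorm_of_dotProduct_self_eq_norm hvz'
      (smul_mem_lieDualBall hv' hg) using 2
    rw [smul_dotProduct, dotProduct_smul, smul_smul, mul_inv_cancel₀ hv₀, one_smul]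

theorem convexOn_lieNorm : ConvexOn ℝ Set.univ (lieNorm (ι := ι)) := by
  refine ⟨convex_univ, fun x _ y _ a b ha hb _ => ?_⟩
  obtain ⟨g, hg, hval⟩ := (isGreatest_re_dotProduct_lieDualBall (a • x + b • y)).1
  dsimp only at hval
  rw [← hval, add_dotProduct, smul_dotProduct, smul_dotProduct, Complex.add_re, Complex.smul_re,
    Complex.smul_re]
  have hx := (isGreatest_re_dotProduct_lieDualBall x).2 ⟨g, hg, rfl⟩
  have hy := (isGreatest_re_dotProduct_lieDualBall y).2 ⟨g, hg, rfl⟩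
  simp only [smul_eq_mul] at hx hy ⊢
  gcongr

lemma lieNorm_lt_one_iff (z : ι → ℂ) :
    lieNorm z < 1 ↔ √(sqNorm z) < 1 ∧ 2 * sqNorm z < 1 + ‖z ⬝ᵥ z‖ ^ 2 := by
  have hQ := norm_dotProduct_self_le z
  have hQ₀ := norm_nonneg (z ⬝ᵥ z)
  have hsum : (sqNorm z + ‖z ⬝ᵥ z‖) / 2 + (sqNorm z - ‖z ⬝ᵥ z‖) / 2 = sqNorm z := by ring
  have hdiff : (sqNorm z + ‖z ⬝ᵥ z‖) / 2 - (sqNorm z - ‖z ⬝ᵥ z‖) / 2 = ‖z ⬝ᵥ z‖ := by ring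
  rw [lieNorm, add_lt_one_iff (Real.sqrt_nonneg _) (Real.sqrt_nonneg _),
    Real.sq_sqrt (by linarith), Real.sq_sqrt (by linarith), hsum, hdiff, Real.sqrt_lt' one_pos,
    one_pow]

end LieBall

/-- The Lie ball `Lₙ` is a convex subset of `ℂⁿ`. -/
theorem stmt_6 (n : ℕ) :
    Convex ℝ {z : Fin n → ℂ |
      Real.sqrt (∑ j, ‖z j‖ ^ 2) < 1 ∧
      2 * ∑ j, ‖z j‖ ^ 2 < 1 + ‖∑ j, (z j) ^ 2‖ ^ 2} := by
  simpa only [Set.mem_univ, true_and, LieBall.lieNorm_lt_one_iff, LieBall.sqNorm,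
    LieBall.sum_sq_eq_dotProduct_self] using (LieBall.convexOn_lieNorm (ι := Fin n)).convex_lt 1
end

section
/- The Bergman kernel of the domain 𝕃ₙ vanishes at some pair of points for all n ≥ 3: concretely, with z₀ = (ω − 1)/(ω + 1) where ω = exp(iπ/n), one has 1/(1 − z₀)^{2n} − 1/(1 + z₀)^{2n} = 0. -/
open Complex Real

/- If `ω ^ m = 1` and `ω ≠ -1`, then `1 - z = 2 / (ω + 1)` and `1 + z = 2ω / (ω + 1)` for the
Cayley transform `z = (ω - 1) / (ω + 1)`, so their `m`-th powers agree. For `ω = -1` the division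
gives `z = 0` and the claim is trivial. Here `ω = exp (iπ/n)` is a `2n`-th root of unity. -/

theorem one_sub_cayley_pow_eq_one_add_cayley_pow {K : Type*} [Field K] {ω : K} {m : ℕ}
    (hω : ω ^ m = 1) : (1 - (ω - 1) / (ω + 1)) ^ m = (1 + (ω - 1) / (ω + 1)) ^ m := by
  rcases eq_or_ne (ω + 1) 0 with h | h
  · simp [h]
  · have hsub : 1 - (ω - 1) / (ω + 1) = 2 / (ω + 1) := by field_simp; ring
    have hadd : 1 + (ω - 1) / (ω + 1) = 2 * ω / (ω + 1) := by field_simp; ring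
    rw [hsub, hadd, div_pow, div_pow, mul_pow, hω, mul_one]

theorem exp_pi_mul_I_div_pow_two_mul (n : ℕ) : exp (π * I / n) ^ (2 * n) = 1 := by
  rcases eq_or_ne n 0 with rfl | hn
  · simp
  · have hn' : (n : ℂ) ≠ 0 := Nat.cast_ne_zero.mpr hn
    rw [← Complex.exp_nat_mul, ← exp_two_pi_mul_I]
    congr 1
    push_cast
    field_simp

theorem stmt_14_general (n : ℕ) :
    ((1 - (Complex.exp (Real.pi * I / n) - 1) / (Complex.exp (Real.pi * I / n) + 1)) ^ (2 * n))⁻¹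
      - ((1 + (Complex.exp (Real.pi * I / n) - 1) / (Complex.exp (Real.pi * I / n) + 1)) ^ (2 * n))⁻¹
      = 0 := by
  rw [one_sub_cayley_pow_eq_one_add_cayley_pow (exp_pi_mul_I_div_pow_two_mul n), sub_self]

/-- With `z₀ = (ω−1)/(ω+1)` for `ω = exp(iπ/n)`, `n ≥ 3`, the Bergman-kernel
expression `1/(1−z₀)^{2n} − 1/(1+z₀)^{2n}` vanishes. -/
theorem stmt_14 (n : ℕ) (hn : 3 ≤ n) :
    ((1 - (Complex.exp (Real.pi * I / n) - 1) / (Complex.exp (Real.pi * I / n) + 1)) ^ (2 * n))⁻¹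
      - ((1 + (Complex.exp (Real.pi * I / n) - 1) / (Complex.exp (Real.pi * I / n) + 1)) ^ (2 * n))⁻¹
      = 0 :=
  stmt_14_general n
end

section
/- If z = (z₁, …, zₙ) ∈ Lₙ (the Lie ball), then the truncation (z₁, …, zₘ) ∈ Lₘ for every m < n. -/
/-!
Split `z = (z', z'')`, with `a = ‖z'‖²`, `b = ‖z''‖²`, `s = z'∙z'`. Since `|z''∙z''| ≤ b`,
the defining inequality of the larger ball gives `2a + 2b < 1 + (|s| + b)²`, that is
`2a < 1 + |s|² - b (2 - 2|s| - b)`; and `|s| ≤ a` together with `a + b < 1` makes the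
bracket positive.
-/

open Finset

variable {ι : Type*}

/-- `z` restricted to the coordinates in `s` lies in the Lie ball `L_{#s}`. -/
def IsInLieBallOn (z : ι → ℂ) (s : Finset ι) : Prop :=
  √(∑ j ∈ s, ‖z j‖ ^ 2) < 1 ∧ 2 * ∑ j ∈ s, ‖z j‖ ^ 2 < 1 + ‖∑ j ∈ s, z j ^ 2‖ ^ 2

lemma norm_sum_sq_le_sum_norm_sq (z : ι → ℂ) (s : Finset ι) :
    ‖∑ j ∈ s, z j ^ 2‖ ≤ ∑ j ∈ s, ‖z j‖ ^ 2 :=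
  (norm_sum_le _ _).trans_eq (by simp only [norm_pow])

theorem IsInLieBallOn.mono {z : ι → ℂ} {s t : Finset ι} (ht : IsInLieBallOn z t)
    (hst : s ⊆ t) : IsInLieBallOn z s := by
  classical
  obtain ⟨ht_sqrt, ht_ineq⟩ := ht
  have hnonneg : ∀ u : Finset ι, 0 ≤ ∑ j ∈ u, ‖z j‖ ^ 2 := fun _ =>
    sum_nonneg fun _ _ => sq_nonneg _
  have hle : ∑ j ∈ s, ‖z j‖ ^ 2 ≤ ∑ j ∈ t, ‖z j‖ ^ 2 :=
    sum_le_sum_of_subset_of_nonneg hst fun _ _ _ => sq_nonneg _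
  refine ⟨(Real.sqrt_le_sqrt hle).trans_lt ht_sqrt, ?_⟩
  have ht_lt_one : ∑ j ∈ t, ‖z j‖ ^ 2 < 1 := by
    simpa only [one_pow] using (Real.sqrt_lt' one_pos).mp ht_sqrt
  rw [← sum_sdiff hst, ← sum_sdiff hst (f := fun j => z j ^ 2)] at ht_ineq
  rw [← sum_sdiff hst] at ht_lt_one
  have hrest : ‖∑ j ∈ t \ s, z j ^ 2 + ∑ j ∈ s, z j ^ 2‖ ≤
      ∑ j ∈ t \ s, ‖z j‖ ^ 2 + ‖∑ j ∈ s, z j ^ 2‖ :=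
    (norm_add_le _ _).trans (add_le_add_left (norm_sum_sq_le_sum_norm_sq z _) _)
  have hs := norm_sum_sq_le_sum_norm_sq z s
  nlinarith [pow_le_pow_left₀ (norm_nonneg _) hrest 2, hnonneg (t \ s), hnonneg s,
    mul_nonneg (hnonneg (t \ s)) (norm_nonneg (∑ j ∈ s, z j ^ 2))]

/-- If `z ∈ Lₙ` then every truncation `(z₁,…,zₘ)`, `m < n`, lies in `Lₘ`. -/
theorem stmt_17 (n : ℕ) (z : Fin n → ℂ)
    (hz : Real.sqrt (∑ j, ‖z j‖ ^ 2) < 1 ∧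
      2 * ∑ j, ‖z j‖ ^ 2 < 1 + ‖∑ j, (z j) ^ 2‖ ^ 2)
    (m : ℕ) (hm : m < n) :
    Real.sqrt (∑ j : Fin m, ‖z (Fin.castLE hm.le j)‖ ^ 2) < 1 ∧
      2 * ∑ j : Fin m, ‖z (Fin.castLE hm.le j)‖ ^ 2 <
        1 + ‖∑ j : Fin m, (z (Fin.castLE hm.le j)) ^ 2‖ ^ 2 := by
  have h := (show IsInLieBallOn z univ from hz).mono (subset_univ (univ.map (Fin.castLEEmb hm.le)))
  simpa only [IsInLieBallOn, sum_map, Fin.coe_castLEEmb] using h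
end
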